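/- Suppose c > 0 satisfies the gap condition, z* is an optimal threshold for P, ẑ ∈ ℝ satisfies f̂(ẑ) = P, and f(z*) = P. Then the set {i ∈ I : C_i ≤ ẑ} is nonempty and z* = max{C_i : i ∈ I, C_i ≤ ẑ}. -/

import Mathlib

/-- Ramp function `w_c`: `1` for `z ≥ 0`, `z/c + 1` for `-c ≤ z < 0`, `0` for `z < -c`. -/
noncomputable def rampW (c z : ℝ) : ℝ :=
  if 0 ≤ z then 1 else if -c ≤ z then z / c + 1 else 0

/-- The cumulative criticality function `f(z) = ∑_{i : C i ≤ z} ℓ i`. -/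
noncomputable def ccf {I : Type*} [Fintype I] (ℓ C : I → ℝ) (z : ℝ) : ℝ :=
  ∑ i ∈ Finset.univ.filter (fun i => C i ≤ z), ℓ i

/-- The Lipschitz surrogate CCF `f̂(z) = ∑_i ℓ i · w_c (z - C i)`. -/
noncomputable def sccf {I : Type*} [Fintype I] (ℓ C : I → ℝ) (c z : ℝ) : ℝ :=
  ∑ i, ℓ i * rampW c (z - C i)

/-- The gap condition on `c`: criticality values that differ, differ by at least `c`. -/
def GapCond {I : Type*} (C : I → ℝ) (c : ℝ) : Prop :=
  ∀ i j : I, C j < C i → c ≤ C i - C j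

/-- `z` is an optimal threshold for `P`: `f(z) ≥ P` and `f(z') < P` for all `z' < z`. -/
def OptThresh {I : Type*} [Fintype I] (ℓ C : I → ℝ) (P z : ℝ) : Prop :=
  P ≤ ccf ℓ C z ∧ ∀ z' < z, ccf ℓ C z' < P

lemma rampW_nonneg {c : ℝ} (hc : 0 < c) (z : ℝ) : 0 ≤ rampW c z := by
  unfold rampW
  split_ifs with h1 h2
  · norm_num
  · have : 0 ≤ (z + c) / c := div_nonneg (by linarith) hc.le
    have hz : z / c + 1 = (z + c) / c := by field_simp
    linarith [hz ▸ this]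
  · exact le_refl 0

lemma rampW_lt_one {c : ℝ} (hc : 0 < c) {z : ℝ} (hz : z < 0) : rampW c z < 1 := by
  unfold rampW
  split_ifs with h1 h2
  · linarith
  · have : z / c < 0 := div_neg_of_neg_of_pos hz hc
    linarith
  · norm_num

lemma rampW_one {c : ℝ} {z : ℝ} (hz : 0 ≤ z) : rampW c z = 1 := by
  unfold rampW; rw [if_pos hz]

lemma rampW_pos_imp {c : ℝ} (hc : 0 < c) {z : ℝ} (h : 0 < rampW c z) : -c < z := by
  unfold rampW at h
  split_ifs at h with h1 h2
  · linarith
  · rcases lt_or_eq_of_le h2 with h3 | h3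
    · exact h3
    · exfalso
      rw [← h3] at h
      have : -c / c = -1 := by field_simp
      rw [this] at h; linarith
  · linarith

lemma rampW_zero {c : ℝ} (hc : 0 < c) {z : ℝ} (hz : z ≤ -c) : rampW c z = 0 := by
  unfold rampW
  split_ifs with h1 h2
  · linarith
  · have : z = -c := le_antisymm hz h2
    rw [this]; field_simp; norm_num
  · rfl

/-- Lemma 3, case `f(z*) = P`: `z* = max {C i : C i ≤ ẑ}`. -/
theorem opt_threshold_max_below_zhat
    {I : Type*} [Fintype I] [Nonempty I] (ℓ C : I → ℝ)
    (hℓ : ∀ i, 0 < ℓ i) (hC : ∀ i, C i ∈ Set.Icc (0 : ℝ) 1)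
    (c : ℝ) (hc : 0 < c) (hgap : GapCond C c)
    (P zstar : ℝ) (hopt : OptThresh ℓ C P zstar)
    (zhat : ℝ) (hzhat : sccf ℓ C c zhat = P)
    (heq : ccf ℓ C zstar = P) :
    ∃ hne : (Finset.univ.filter (fun i : I => C i ≤ zhat)).Nonempty,
      zstar = (Finset.univ.filter (fun i : I => C i ≤ zhat)).sup' hne C := by
  classical
  obtain ⟨hP_le, hlt⟩ := hopt
  have hccf_nonneg : ∀ z : ℝ, 0 ≤ ccf ℓ C z := fun z =>
    Finset.sum_nonneg fun i _ => (hℓ i).le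
  have hccf_mono : ∀ {a b : ℝ}, a ≤ b → ccf ℓ C a ≤ ccf ℓ C b := by
    intro a b hab
    apply Finset.sum_le_sum_of_subset_of_nonneg
    · intro i hi
      simp only [Finset.mem_filter, Finset.mem_univ, true_and] at *
      exact hi.trans hab
    · intro i _ _; exact (hℓ i).le
  have hPpos : 0 < P := by
    have h := hlt (zstar - 1) (by linarith)
    have h0 := hccf_nonneg (zstar - 1)
    linarith
  -- there exists i0 with C i0 = zstar
  have hexists : ∃ i0 : I, C i0 = zstar := by
    by_contra hno
    push_neg at hno
    by_cases hT : (Finset.univ.filter (fun i : I => C i < zstar)).Nonempty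
    · set z' := (Finset.univ.filter (fun i : I => C i < zstar)).sup' hT C with hz'
      have hz'lt : z' < zstar := by
        rw [hz', Finset.sup'_lt_iff]
        intro i hi; exact (Finset.mem_filter.mp hi).2
      have hfilter : Finset.univ.filter (fun i : I => C i ≤ z') =
          Finset.univ.filter (fun i : I => C i ≤ zstar) := by
        ext i
        simp only [Finset.mem_filter, Finset.mem_univ, true_and]
        constructor
        · intro hi; exact hi.trans hz'lt.le
        · intro hi
          have hlt' : C i < zstar := lt_of_le_of_ne hi (hno i)
          exact Finset.le_sup' C (Finset.mem_filter.mpr ⟨Finset.mem_univ i, hlt'⟩)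
      have h1 := hlt z' hz'lt
      have h2 : ccf ℓ C z' = ccf ℓ C zstar := by
        unfold ccf; rw [hfilter]
      rw [h2, heq] at h1
      exact lt_irrefl P h1
    · rw [Finset.not_nonempty_iff_eq_empty] at hT
      have hempty : Finset.univ.filter (fun i : I => C i ≤ zstar) = ∅ := by
        rw [Finset.eq_empty_iff_forall_notMem]
        intro i hi
        have hi' := (Finset.mem_filter.mp hi).2
        have : C i < zstar := lt_of_le_of_ne hi' (hno i)
        have : i ∈ Finset.univ.filter (fun i : I => C i < zstar) :=
          Finset.mem_filter.mpr ⟨Finset.mem_univ i, this⟩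
        rw [hT] at this
        exact absurd this (Finset.notMem_empty i)
      have : ccf ℓ C zstar = 0 := by unfold ccf; rw [hempty]; simp
      linarith [heq ▸ this]
  obtain ⟨i0, hi0⟩ := hexists
  -- decompose sccf
  set R : ℝ := ∑ i ∈ Finset.univ.filter (fun i : I => zhat < C i),
      ℓ i * rampW c (zhat - C i) with hR
  have hsplit : sccf ℓ C c zhat = ccf ℓ C zhat + R := by
    unfold sccf ccf
    rw [← Finset.sum_filter_add_sum_filter_not Finset.univ (fun i => C i ≤ zhat)
      (fun i => ℓ i * rampW c (zhat - C i))]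
    congr 1
    · apply Finset.sum_congr rfl
      intro i hi
      have h1 : C i ≤ zhat := (Finset.mem_filter.mp hi).2
      rw [rampW_one (by linarith), mul_one]
    · rw [hR]
      apply Finset.sum_congr _ (fun _ _ => rfl)
      ext i
      simp [not_le]
  have hRnonneg : 0 ≤ R := by
    apply Finset.sum_nonneg
    intro i _
    exact mul_nonneg (hℓ i).le (rampW_nonneg hc _)
  have hPsum : ccf ℓ C zhat + R = P := by rw [← hsplit]; exact hzhat
  -- main case split on R
  have hRzero : R = 0 := by
    rcases eq_or_lt_of_le hRnonneg with h | hRpos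
    · exact h.symm
    exfalso
    -- there is j with zhat < C j and positive ramp
    obtain ⟨j, hjmem, hjpos⟩ :
        ∃ j ∈ Finset.univ.filter (fun i : I => zhat < C i),
          0 < ℓ j * rampW c (zhat - C j) := by
      by_contra hcon
      push_neg at hcon
      have : R ≤ 0 := Finset.sum_nonpos fun i hi => hcon i hi
      linarith
    have hjz : zhat < C j := (Finset.mem_filter.mp hjmem).2
    have hrampj : 0 < rampW c (zhat - C j) := by
      by_contra h
      push_neg at h
      nlinarith [hℓ j]
    have hjub : C j < zhat + c := by
      have := rampW_pos_imp hc hrampj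
      linarith
    set v := C j with hv
    -- uniqueness of the value in (zhat, zhat + c)
    have huniq : ∀ i : I, zhat < C i → C i < zhat + c → C i = v := by
      intro i h1 h2
      rcases lt_trichotomy (C i) v with h3 | h3 | h3
      · have := hgap j i h3; linarith
      · exact h3
      · have := hgap i j h3; linarith
    -- R = θ * L
    set θ := rampW c (zhat - v) with hθ
    set L : ℝ := ∑ i ∈ Finset.univ.filter (fun i : I => C i = v), ℓ i with hL
    have hRval : R = θ * L := by
      rw [hR, hL, Finset.mul_sum]
      rw [← Finset.sum_filter_add_sum_filter_not
        (Finset.univ.filter (fun i : I => zhat < C i)) (fun i => C i = v)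
        (fun i => ℓ i * rampW c (zhat - C i))]
      have h1 : ∀ i ∈ (Finset.univ.filter (fun i : I => zhat < C i)).filter
          (fun i => ¬ C i = v), ℓ i * rampW c (zhat - C i) = 0 := by
        intro i hi
        simp only [Finset.mem_filter, Finset.mem_univ, true_and] at hi
        have hge : zhat + c ≤ C i := by
          by_contra h
          push_neg at h
          exact hi.2 (huniq i hi.1 h)
        have : rampW c (zhat - C i) = 0 := rampW_zero hc (by linarith)
        rw [this, mul_zero]
      rw [Finset.sum_eq_zero h1, add_zero]
      have h2 : (Finset.univ.filter (fun i : I => zhat < C i)).filter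
          (fun i => C i = v) = Finset.univ.filter (fun i : I => C i = v) := by
        ext i
        simp only [Finset.mem_filter, Finset.mem_univ, true_and]
        constructor
        · rintro ⟨_, h⟩; exact h
        · intro h; exact ⟨by rw [h]; exact hjz, h⟩
      rw [h2]
      apply Finset.sum_congr rfl
      intro i hi
      have hiv : C i = v := (Finset.mem_filter.mp hi).2
      rw [hiv, mul_comm]
    have hθlt : θ < 1 := rampW_lt_one hc (by rw [hv] at *; linarith)
    have hjmemv : j ∈ Finset.univ.filter (fun i : I => C i = v) :=
      Finset.mem_filter.mpr ⟨Finset.mem_univ j, rfl⟩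
    have hLpos : 0 < L :=
      Finset.sum_pos (fun i _ => hℓ i) ⟨j, hjmemv⟩
    have hRltL : R < L := by
      rw [hRval]
      nlinarith [rampW_nonneg hc (zhat - v)]
    -- ccf v ≥ ccf zhat + L
    have hdisj : Disjoint (Finset.univ.filter (fun i : I => C i ≤ zhat))
        (Finset.univ.filter (fun i : I => C i = v)) := by
      rw [Finset.disjoint_left]
      intro i hi hi2
      have h1 : C i ≤ zhat := (Finset.mem_filter.mp hi).2
      have h2 : C i = v := (Finset.mem_filter.mp hi2).2
      rw [h2] at h1; linarith
    have hunion : ccf ℓ C zhat + L =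
        ∑ i ∈ (Finset.univ.filter (fun i : I => C i ≤ zhat)) ∪
          (Finset.univ.filter (fun i : I => C i = v)), ℓ i := by
      unfold ccf; rw [hL, Finset.sum_union hdisj]
    have hsubv : (Finset.univ.filter (fun i : I => C i ≤ zhat)) ∪
        (Finset.univ.filter (fun i : I => C i = v)) ⊆
        Finset.univ.filter (fun i : I => C i ≤ v) := by
      intro i hi
      rcases Finset.mem_union.mp hi with h | h
      · have := (Finset.mem_filter.mp h).2
        exact Finset.mem_filter.mpr ⟨Finset.mem_univ i, by linarith⟩
      · have := (Finset.mem_filter.mp h).2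
        exact Finset.mem_filter.mpr ⟨Finset.mem_univ i, le_of_eq this⟩
    have hccfv : ccf ℓ C zhat + L ≤ ccf ℓ C v := by
      rw [hunion]
      exact Finset.sum_le_sum_of_subset_of_nonneg hsubv (fun k _ _ => (hℓ k).le)
    have hfvP : P < ccf ℓ C v := by linarith
    have hccfzh : ccf ℓ C zhat < P := by linarith
    have hzhlt : zhat < zstar := by
      by_contra h
      push_neg at h
      have := hccf_mono h
      linarith
    have hzv : zstar < v := by
      rcases lt_trichotomy v zstar with h | h | h
      · have := hlt v h; linarith
      · rw [h] at hfvP; linarith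
      · exact h
    have hsub2 : Finset.univ.filter (fun i : I => C i ≤ zstar) ⊆
        Finset.univ.filter (fun i : I => C i ≤ zhat) := by
      intro i hi
      have h1 : C i ≤ zstar := (Finset.mem_filter.mp hi).2
      refine Finset.mem_filter.mpr ⟨Finset.mem_univ i, ?_⟩
      by_contra h
      push_neg at h
      have := huniq i h (by linarith)
      linarith
    have : ccf ℓ C zstar ≤ ccf ℓ C zhat :=
      Finset.sum_le_sum_of_subset_of_nonneg hsub2 (fun k _ _ => (hℓ k).le)
    linarith
  -- R = 0, so ccf zhat = P
  have hfz : ccf ℓ C zhat = P := by linarith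
  have hzs_le : zstar ≤ zhat := by
    by_contra h
    push_neg at h
    have := hlt zhat h
    linarith
  have hi0mem : i0 ∈ Finset.univ.filter (fun i : I => C i ≤ zhat) :=
    Finset.mem_filter.mpr ⟨Finset.mem_univ i0, by rw [hi0]; exact hzs_le⟩
  have hne : (Finset.univ.filter (fun i : I => C i ≤ zhat)).Nonempty := ⟨i0, hi0mem⟩
  refine ⟨hne, ?_⟩
  apply le_antisymm
  · rw [← hi0]; exact Finset.le_sup' C hi0mem
  · apply Finset.sup'_le
    intro j hj
    by_contra h
    push_neg at h
    have hjzh : C j ≤ zhat := (Finset.mem_filter.mp hj).2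
    have hsub : Finset.univ.filter (fun i : I => C i ≤ zstar) ⊆
        Finset.univ.filter (fun i : I => C i ≤ zhat) := by
      intro i hi
      simp only [Finset.mem_filter, Finset.mem_univ, true_and] at *
      exact hi.trans hzs_le
    have hjnot : j ∉ Finset.univ.filter (fun i : I => C i ≤ zstar) := by
      simp only [Finset.mem_filter, Finset.mem_univ, true_and]
      push_neg
      exact h
    have hstrict : ccf ℓ C zstar < ccf ℓ C zhat :=
      Finset.sum_lt_sum_of_subset hsub hj hjnot (hℓ j) (fun k _ _ => (hℓ k).le)
    linarith
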